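/- arXiv:1812.02696 — 7 statements merged into one kernel-verified Lean document; each statement's English description precedes it below -/
import Mathlib

section
/- At any round t of the in-processing algorithm, the fairness violation vector r̂_t(h) ∈ ℝ^{4(|𝒜|−1)}, whose coordinates are the signed differences of group-conditional empirical false/true positive rates of a fixed classifier h between each group a ≠ 0 and group 0 (minus γ), has ℓ1-sensitivity with respect to changing a single individual's protected attribute at most 2|𝒜| / (min_{a,y} q̂_{a,y} · m − 1). -/
open Finset

/-- Empirical false positive rate of the predictions `pred` on group `a`:
the fraction of individuals with `A = a`, `Y = 0` that are predicted `1`. -/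
noncomputable def FPrate {m : ℕ} {𝒜 : Type*} [Fintype 𝒜] [DecidableEq 𝒜]
    (A : Fin m → 𝒜) (Ys pred : Fin m → Bool) (a : 𝒜) : ℝ :=
  ((univ.filter fun i => A i = a ∧ Ys i = false ∧ pred i = true).card : ℝ) /
    ((univ.filter fun i => A i = a ∧ Ys i = false).card : ℝ)

/-- Empirical true positive rate of `pred` on group `a`. -/
noncomputable def TPrate {m : ℕ} {𝒜 : Type*} [Fintype 𝒜] [DecidableEq 𝒜]
    (A : Fin m → 𝒜) (Ys pred : Fin m → Bool) (a : 𝒜) : ℝ :=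
  ((univ.filter fun i => A i = a ∧ Ys i = true ∧ pred i = true).card : ℝ) /
    ((univ.filter fun i => A i = a ∧ Ys i = true).card : ℝ)

/-- Empirical fraction of individuals with `A = a` and `Y = y`. -/
noncomputable def groupFrac {m : ℕ} {𝒜 : Type*} [Fintype 𝒜] [DecidableEq 𝒜]
    (A : Fin m → 𝒜) (Ys : Fin m → Bool) (a : 𝒜) (y : Bool) : ℝ :=
  ((univ.filter fun i => A i = a ∧ Ys i = y).card : ℝ) / m

/-! Changing the attribute of individual `j` only moves `j` between the groups `A j` and `A' j`,
inside the label class `Ys j`. Hence only the two conditional rates of those groups at label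
`Ys j` change, each by at most `1 / (q m - 1)`: a fraction whose denominator is at least `q m`
gains or loses one element. Each coordinate of `r̂` moves by at most the shift of group `a` plus
that of group `a₀`. Summing over `a ≠ a₀`, the shift of `a₀` is counted `|𝒜| - 1` times while the
shifts of all groups add up to at most twice the one-rate bound, which gives
`2 |𝒜| / (q m - 1)`. -/

lemma abs_div_sub_div_sub_one_le {n e d : ℝ} (hn : 0 ≤ n) (hnd : n ≤ d) (hd : 1 < d)
    (he : e = n ∨ e = n - 1) : |n / d - e / (d - 1)| ≤ 1 / (d - 1) := by
  have hd₀ : 0 < d - 1 := by linarith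
  have hd₁ : 0 < d := by linarith
  have hnum : |n * (d - 1) - d * e| ≤ d := by
    rcases he with rfl | rfl <;> rw [abs_le] <;> constructor <;> nlinarith
  calc |n / d - e / (d - 1)| = |n * (d - 1) - d * e| / (d * (d - 1)) := by
        rw [div_sub_div _ _ (by positivity) hd₀.ne', abs_div, abs_of_pos (mul_pos hd₁ hd₀)]
    _ ≤ d / (d * (d - 1)) := by gcongr
    _ = 1 / (d - 1) := by field_simp

section FilterFraction

variable {α : Type*} [DecidableEq α] (p : α → Prop) [DecidablePred p]

lemma abs_card_filter_div_sub_erase_le {S : Finset α} {j : α} (hj : j ∈ S) (hS : 1 < #S) :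
    |(#(S.filter p) : ℝ) / #S - #((S.erase j).filter p) / #(S.erase j)| ≤ 1 / (#S - 1) := by
  have hS₁ : (1 : ℝ) ≤ #S := by exact_mod_cast hS.le
  rw [filter_erase, card_erase_of_mem hj, Nat.cast_pred (by omega)]
  refine abs_div_sub_div_sub_one_le (Nat.cast_nonneg _)
    (by exact_mod_cast card_filter_le S p) (by exact_mod_cast hS) ?_
  by_cases hjp : j ∈ S.filter p
  · right
    rw [card_erase_of_mem hjp, Nat.cast_pred (card_pos.mpr ⟨j, hjp⟩)]
  · left
    rw [erase_eq_of_notMem hjp]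

lemma abs_card_filter_div_sub_le_of_erase_eq {S S' : Finset α} {j : α}
    (h : S.erase j = S'.erase j) {q : ℝ} (hq : 1 < q) (hS : q ≤ #S) (hS' : q ≤ #S') :
    |(#(S.filter p) : ℝ) / #S - #(S'.filter p) / #S'| ≤ 1 / (q - 1) := by
  have hq₀ : 0 < q - 1 := by linarith
  have remove : ∀ {S S' : Finset α}, S.erase j = S'.erase j → j ∈ S → j ∉ S' → q ≤ #S →
      |(#(S.filter p) : ℝ) / #S - #(S'.filter p) / #S'| ≤ 1 / (q - 1) := by
    intro S S' h hj hj' hS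
    obtain rfl : S' = S.erase j := by rw [h, erase_eq_of_notMem hj']
    have hS₁ : 1 < #S := by exact_mod_cast hq.trans_le hS
    exact (abs_card_filter_div_sub_erase_le p hj hS₁).trans
      (one_div_le_one_div_of_le hq₀ (by linarith))
  by_cases hj : j ∈ S <;> by_cases hj' : j ∈ S'
  · obtain rfl : S = S' := by rw [← insert_erase hj, h, insert_erase hj']
    simpa using hq₀.le
  · exact remove h hj hj' hS
  · rw [abs_sub_comm]
    exact remove h.symm hj' hj hS'
  · obtain rfl : S = S' := by rw [← erase_eq_of_notMem hj, h, erase_eq_of_notMem hj']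
    simpa using hq₀.le

end FilterFraction

lemma sum_erase_add_le_card_mul {ι : Type*} [Fintype ι] [DecidableEq ι] (f : ι → ℝ) {a₀ : ι}
    {B : ℝ} (h₀ : 0 ≤ f a₀) (hB : f a₀ ≤ B) (hsum : ∑ a, f a ≤ 2 * B) :
    ∑ a ∈ univ.erase a₀, (f a + f a₀) ≤ Fintype.card ι * B := by
  have hcard : 0 < Fintype.card ι := Fintype.card_pos_iff.mpr ⟨a₀⟩
  obtain h | h : Fintype.card ι = 1 ∨ 2 ≤ Fintype.card ι := by omega
  · have hempty : univ.erase a₀ = ∅ := by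
      rw [← card_eq_zero, card_erase_of_mem (mem_univ a₀), card_univ, h]
    rw [hempty, sum_empty, h, Nat.cast_one, one_mul]
    exact h₀.trans hB
  · have h₂ : (2 : ℝ) ≤ Fintype.card ι := by exact_mod_cast h
    rw [sum_add_distrib, sum_erase_eq_sub (mem_univ a₀), sum_const,
      card_erase_of_mem (mem_univ a₀), card_univ, nsmul_eq_mul, Nat.cast_pred hcard]
    nlinarith

lemma abs_sub_sub_sub_le (x x' y y' c : ℝ) :
    |(x - y - c) - (x' - y' - c)| ≤ |x - x'| + |y - y'| := by
  rw [show (x - y - c) - (x' - y' - c) = (x - x') - (y - y') by ring]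
  exact abs_sub _ _

section Rates

variable {m : ℕ} {𝒜 : Type*} [DecidableEq 𝒜]

def groupSet (A : Fin m → 𝒜) (Ys : Fin m → Bool) (a : 𝒜) (y : Bool) : Finset (Fin m) :=
  univ.filter fun i => A i = a ∧ Ys i = y

/-- `condRate A Ys pred a false` and `condRate A Ys pred a true` are the FP and TP rates of
group `a`. -/
noncomputable def condRate (A : Fin m → 𝒜) (Ys pred : Fin m → Bool) (a : 𝒜) (y : Bool) : ℝ :=
  #((groupSet A Ys a y).filter fun i => pred i = true) / #(groupSet A Ys a y)

noncomputable def rateShift (A A' : Fin m → 𝒜) (Ys pred : Fin m → Bool) (a : 𝒜) : ℝ :=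
  ∑ y, |condRate A Ys pred a y - condRate A' Ys pred a y|

variable {A A' : Fin m → 𝒜} (Ys pred : Fin m → Bool) {a : 𝒜} {y : Bool} {j : Fin m}

lemma rateShift_eq [Fintype 𝒜] : rateShift A A' Ys pred a =
    |FPrate A Ys pred a - FPrate A' Ys pred a| + |TPrate A Ys pred a - TPrate A' Ys pred a| := by
  simp only [rateShift, Fintype.sum_bool, condRate, groupSet, FPrate, TPrate, filter_filter,
    and_assoc]
  ring

lemma rateShift_nonneg : 0 ≤ rateShift A A' Ys pred a :=
  sum_nonneg fun _ _ => abs_nonneg _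

lemma groupSet_erase_eq (hA : ∀ i, i ≠ j → A i = A' i) :
    (groupSet A Ys a y).erase j = (groupSet A' Ys a y).erase j := by
  ext i
  rcases eq_or_ne i j with rfl | hij
  · simp
  · simp [groupSet, hij, hA i hij]

lemma groupSet_eq_of_iff (hA : ∀ i, i ≠ j → A i = A' i)
    (hj : A j = a ∧ Ys j = y ↔ A' j = a ∧ Ys j = y) :
    groupSet A Ys a y = groupSet A' Ys a y := by
  ext i
  rcases eq_or_ne i j with rfl | hij
  · simpa [groupSet] using hj
  · simp [groupSet, hA i hij]

lemma le_card_groupSet [Fintype 𝒜] {q : ℝ} (hm : 0 < m) (hq : q ≤ groupFrac A Ys a y) :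
    q * m ≤ #(groupSet A Ys a y) :=
  (le_div_iff₀ (by exact_mod_cast hm)).mp hq

lemma abs_condRate_sub_le [Fintype 𝒜] (hA : ∀ i, i ≠ j → A i = A' i) {q : ℝ} (hq : 1 < q * m)
    (hAq : q ≤ groupFrac A Ys a y) (hA'q : q ≤ groupFrac A' Ys a y) :
    |condRate A Ys pred a y - condRate A' Ys pred a y| ≤ 1 / (q * m - 1) := by
  have hm : 0 < m := Nat.pos_of_ne_zero fun h => by simp [h] at hq; linarith
  exact abs_card_filter_div_sub_le_of_erase_eq _ (groupSet_erase_eq Ys hA) hq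
    (le_card_groupSet Ys hm hAq) (le_card_groupSet Ys hm hA'q)

lemma condRate_eq_of_iff (hA : ∀ i, i ≠ j → A i = A' i)
    (hj : A j = a ∧ Ys j = y ↔ A' j = a ∧ Ys j = y) :
    condRate A Ys pred a y = condRate A' Ys pred a y := by
  rw [condRate, condRate, groupSet_eq_of_iff Ys hA hj]

lemma rateShift_eq_zero (hA : ∀ i, i ≠ j → A i = A' i) (ha : a ≠ A j) (ha' : a ≠ A' j) :
    rateShift A A' Ys pred a = 0 :=
  sum_eq_zero fun y _ => by
    rw [condRate_eq_of_iff Ys pred hA (iff_of_false (fun h => ha h.1.symm) fun h => ha' h.1.symm),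
      sub_self, abs_zero]

lemma rateShift_eq_abs_condRate_sub (hA : ∀ i, i ≠ j → A i = A' i) :
    rateShift A A' Ys pred a = |condRate A Ys pred a (Ys j) - condRate A' Ys pred a (Ys j)| :=
  Fintype.sum_eq_single (Ys j) fun y hy => by
    rw [condRate_eq_of_iff Ys pred hA (iff_of_false (fun h => hy h.2.symm) fun h => hy h.2.symm),
      sub_self, abs_zero]

lemma violation_coords_sub_le [Fintype 𝒜] (a a₀ : 𝒜) (γ : ℝ) :
    |(FPrate A Ys pred a - FPrate A Ys pred a₀ - γ) -
          (FPrate A' Ys pred a - FPrate A' Ys pred a₀ - γ)| +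
       |(FPrate A Ys pred a₀ - FPrate A Ys pred a - γ) -
          (FPrate A' Ys pred a₀ - FPrate A' Ys pred a - γ)| +
       |(TPrate A Ys pred a - TPrate A Ys pred a₀ - γ) -
          (TPrate A' Ys pred a - TPrate A' Ys pred a₀ - γ)| +
       |(TPrate A Ys pred a₀ - TPrate A Ys pred a - γ) -
          (TPrate A' Ys pred a₀ - TPrate A' Ys pred a - γ)| ≤
      2 * (rateShift A A' Ys pred a + rateShift A A' Ys pred a₀) := by
  set f := FPrate A Ys pred
  set f' := FPrate A' Ys pred
  set t := TPrate A Ys pred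
  set t' := TPrate A' Ys pred
  rw [rateShift_eq, rateShift_eq]
  linarith [abs_sub_sub_sub_le (f a) (f' a) (f a₀) (f' a₀) γ,
    abs_sub_sub_sub_le (f a₀) (f' a₀) (f a) (f' a) γ,
    abs_sub_sub_sub_le (t a) (t' a) (t a₀) (t' a₀) γ,
    abs_sub_sub_sub_le (t a₀) (t' a₀) (t a) (t' a) γ]

lemma rateShift_le [Fintype 𝒜] (hA : ∀ i, i ≠ j → A i = A' i) {q : ℝ} (hq : 1 < q * m)
    (hAq : q ≤ groupFrac A Ys a (Ys j)) (hA'q : q ≤ groupFrac A' Ys a (Ys j)) :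
    rateShift A A' Ys pred a ≤ 1 / (q * m - 1) := by
  rw [rateShift_eq_abs_condRate_sub Ys pred hA]
  exact abs_condRate_sub_le Ys pred hA hq hAq hA'q

lemma sum_rateShift_le [Fintype 𝒜] (hA : ∀ i, i ≠ j → A i = A' i) {q : ℝ} (hq : 1 < q * m)
    (hAq : ∀ a y, q ≤ groupFrac A Ys a y) (hA'q : ∀ a y, q ≤ groupFrac A' Ys a y) :
    ∑ a, rateShift A A' Ys pred a ≤ 2 * (1 / (q * m - 1)) :=
  calc ∑ a, rateShift A A' Ys pred a = ∑ a ∈ {A j, A' j}, rateShift A A' Ys pred a :=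
        (sum_subset (subset_univ _) fun a _ ha => by
          simp only [mem_insert, mem_singleton, not_or] at ha
          exact rateShift_eq_zero Ys pred hA ha.1 ha.2).symm
    _ ≤ #{A j, A' j} • (1 / (q * m - 1)) :=
        sum_le_card_nsmul _ _ _ fun a _ => rateShift_le Ys pred hA hq (hAq a _) (hA'q a _)
    _ ≤ 2 * (1 / (q * m - 1)) := by
        rw [nsmul_eq_mul]
        have : (0 : ℝ) < q * m - 1 := by linarith
        gcongr
        exact_mod_cast card_le_two

end Rates

/-- the fairness-violation vector `r̂(h)` (signed FP/TP rate
differences between each group `a ≠ 0` and group `0`, minus `γ`) has ℓ1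
sensitivity at most `2|𝒜| / (min_{a,y} q̂_{a,y}·m − 1)` with respect to
changing a single individual's protected attribute. -/
theorem fairness_vector_sensitivity {m : ℕ} {𝒜 : Type*} [Fintype 𝒜] [DecidableEq 𝒜]
    (A A' : Fin m → 𝒜) (Ys pred : Fin m → Bool) (a0 : 𝒜) (γ : ℝ) (j : Fin m)
    (hneighbor : ∀ i : Fin m, i ≠ j → A i = A' i)
    (qmin : ℝ)
    (hqmin : ∀ a y, qmin ≤ groupFrac A Ys a y)
    (hqmin' : ∀ a y, qmin ≤ groupFrac A' Ys a y)
    (hm : 1 < qmin * m) :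
    ∑ a ∈ univ.erase a0,
      (|(FPrate A Ys pred a - FPrate A Ys pred a0 - γ) -
          (FPrate A' Ys pred a - FPrate A' Ys pred a0 - γ)| +
       |(FPrate A Ys pred a0 - FPrate A Ys pred a - γ) -
          (FPrate A' Ys pred a0 - FPrate A' Ys pred a - γ)| +
       |(TPrate A Ys pred a - TPrate A Ys pred a0 - γ) -
          (TPrate A' Ys pred a - TPrate A' Ys pred a0 - γ)| +
       |(TPrate A Ys pred a0 - TPrate A Ys pred a - γ) -
          (TPrate A' Ys pred a0 - TPrate A' Ys pred a - γ)|)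
      ≤ 2 * (Fintype.card 𝒜) / (qmin * m - 1) := by
  calc _ ≤ ∑ a ∈ univ.erase a0,
          2 * (rateShift A A' Ys pred a + rateShift A A' Ys pred a0) :=
        sum_le_sum fun a _ => violation_coords_sub_le Ys pred a a0 γ
    _ = 2 * ∑ a ∈ univ.erase a0, (rateShift A A' Ys pred a + rateShift A A' Ys pred a0) :=
        (mul_sum _ _ _).symm
    _ ≤ 2 * (Fintype.card 𝒜 * (1 / (qmin * m - 1))) := by
        gcongr
        exact sum_erase_add_le_card_mul _ (rateShift_nonneg Ys pred)
          (rateShift_le Ys pred hneighbor hm (hqmin a0 _) (hqmin' a0 _))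
          (sum_rateShift_le Ys pred hneighbor hm hqmin hqmin')
    _ = 2 * (Fintype.card 𝒜) / (qmin * m - 1) := by ring
end

section
/- Let (Q̃, λ̃) be a ν-approximate equilibrium of the zero-sum game with payoff L(Q, λ) = êrr(Q) + λᵀ r̂(Q), where Λ = {λ ∈ ℝ₊^k : ‖λ‖₁ ≤ B}. Then for any Q* ∈ Δ(ℋ) satisfying the fairness constraints (i.e., r̂(Q*) ≤ 0 coordinate-wise), êrr(Q̃) ≤ êrr(Q*) + 2ν. -/
open Finset

/-- empirical error bound of Agarwal et al.: if `(Q̃, λ̃)` is a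
`ν`-approximate equilibrium of the Lagrangian game `L(Q, λ) = êrr(Q) + λᵀr̂(Q)`
with dual space `Λ = {λ ≥ 0 : ‖λ‖₁ ≤ B}`, then for any feasible `Q*`
(i.e. `r̂(Q*) ≤ 0`), `êrr(Q̃) ≤ êrr(Q*) + 2ν`. -/
theorem approx_equilibrium_error_bound {V : Type*} {k : ℕ}
    (err : V → ℝ) (r : V → Fin k → ℝ) (B ν : ℝ) (hB : 0 ≤ B)
    (Qtil : V) (ltil : Fin k → ℝ)
    (hltil : (∀ j, 0 ≤ ltil j) ∧ ∑ j, |ltil j| ≤ B)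
    (heq1 : ∀ Q : V, err Qtil + ∑ j, ltil j * r Qtil j
        ≤ err Q + ∑ j, ltil j * r Q j + ν)
    (heq2 : ∀ lam : Fin k → ℝ, (∀ j, 0 ≤ lam j) → (∑ j, |lam j| ≤ B) →
      err Qtil + ∑ j, ltil j * r Qtil j
        ≥ err Qtil + ∑ j, lam j * r Qtil j - ν)
    (Qstar : V) (hfeas : ∀ j, r Qstar j ≤ 0) :
    err Qtil ≤ err Qstar + 2 * ν := by
  obtain ⟨hpos, _⟩ := hltil
  have h0 := heq2 (fun _ => 0) (fun _ => le_refl 0) (by simpa using hB)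
  simp only [zero_mul, Finset.sum_const_zero] at h0
  -- h0 : err Qtil + ∑ j, ltil j * r Qtil j ≥ err Qtil - ν
  have hsum : -ν ≤ ∑ j, ltil j * r Qtil j := by linarith
  have h1 := heq1 Qstar
  have hneg : ∑ j, ltil j * r Qstar j ≤ 0 :=
    Finset.sum_nonpos fun j _ => mul_nonpos_of_nonneg_of_nonpos (hpos j) (hfeas j)
  linarith
end

section
/- Let (Q̃, λ̃) be a ν-approximate equilibrium of the zero-sum game with payoff L(Q, λ) = êrr(Q) + λᵀ r̂(Q), Λ = {λ ∈ ℝ₊^k : ‖λ‖₁ ≤ B}, êrr taking values in [0,1], and suppose some Q* ∈ Δ(ℋ) satisfies r̂(Q*) ≤ 0 coordinate-wise. Then every coordinate of r̂(Q̃) is at most (1 + 2ν)/B; in particular every group false/true positive rate disparity of Q̃ is at most γ + (1 + 2ν)/B. -/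
/-!
A dual player who puts the whole budget `B` on one coordinate `j` earns `B * r̂(Q̃)_j`, so
approximate optimality of `λ̃` gives `B * r̂(Q̃)_j ≤ λ̃ᵀ r̂(Q̃) + ν`. Approximate optimality of `Q̃`
against the feasible `Q*`, where `λ̃ᵀ r̂(Q*) ≤ 0`, gives `λ̃ᵀ r̂(Q̃) ≤ êrr(Q*) - êrr(Q̃) + ν ≤ 1 + ν`.
-/

open Finset

section DualBall

variable {ι : Type*} [Fintype ι] [DecidableEq ι]

lemma sum_abs_pi_single (j : ι) (B : ℝ) : ∑ i, |(Pi.single j B : ι → ℝ) i| = |B| := by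
  simp_rw [Pi.apply_single (fun _ ↦ abs) (fun _ ↦ abs_zero), Fintype.sum_pi_single']

lemma sum_pi_single_mul (j : ι) (B : ℝ) (x : ι → ℝ) :
    ∑ i, (Pi.single j B : ι → ℝ) i * x i = B * x j := by
  simp_rw [← Pi.single_mul_left_apply, Fintype.sum_pi_single']

lemma mul_apply_le_of_forall_dual_le {B c : ℝ} {x : ι → ℝ} (hB : 0 ≤ B)
    (h : ∀ lam : ι → ℝ, (∀ i, 0 ≤ lam i) → ∑ i, |lam i| ≤ B → ∑ i, lam i * x i ≤ c) (j : ι) :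
    B * x j ≤ c := by
  have hnonneg : 0 ≤ (Pi.single j B : ι → ℝ) := Pi.single_nonneg.mpr hB
  have hsingle := h (Pi.single j B) hnonneg
    (by rw [sum_abs_pi_single, abs_of_nonneg hB])
  rwa [sum_pi_single_mul] at hsingle

end DualBall

/-- empirical fairness violation bound of Agarwal et al.: if
`(Q̃, λ̃)` is a `ν`-approximate equilibrium of the Lagrangian game
`L(Q, λ) = êrr(Q) + λᵀr̂(Q)` with `Λ = {λ ≥ 0 : ‖λ‖₁ ≤ B}`, `êrr ∈ [0,1]`,
and the fairness constraints are feasible, then every coordinate of `r̂(Q̃)`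
is at most `(1 + 2ν)/B`. -/
theorem approx_equilibrium_fairness_bound {V : Type*} {k : ℕ}
    (err : V → ℝ) (r : V → Fin k → ℝ) (B ν : ℝ) (hB : 0 < B)
    (herr : ∀ Q : V, err Q ∈ Set.Icc (0:ℝ) 1)
    (Qtil : V) (ltil : Fin k → ℝ)
    (hltil : (∀ j, 0 ≤ ltil j) ∧ ∑ j, |ltil j| ≤ B)
    (heq1 : ∀ Q : V, err Qtil + ∑ j, ltil j * r Qtil j
        ≤ err Q + ∑ j, ltil j * r Q j + ν)
    (heq2 : ∀ lam : Fin k → ℝ, (∀ j, 0 ≤ lam j) → (∑ j, |lam j| ≤ B) →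
      err Qtil + ∑ j, ltil j * r Qtil j
        ≥ err Qtil + ∑ j, lam j * r Qtil j - ν)
    (Qstar : V) (hfeas : ∀ j, r Qstar j ≤ 0) :
    ∀ j, r Qtil j ≤ (1 + 2 * ν) / B := by
  intro j
  have hdual : B * r Qtil j ≤ ∑ i, ltil i * r Qtil i + ν :=
    mul_apply_le_of_forall_dual_le hB.le
      (fun lam hlam hnorm ↦ by linarith [heq2 lam hlam hnorm]) j
  have hfeas_payoff : ∑ i, ltil i * r Qstar i ≤ 0 :=
    sum_nonpos fun i _ ↦ mul_nonpos_of_nonneg_of_nonpos (hltil.1 i) (hfeas i)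
  have hprimal := heq1 Qstar
  obtain ⟨herr_til, -⟩ := herr Qtil
  obtain ⟨-, herr_star⟩ := herr Qstar
  rw [le_div_iff₀ hB]
  linarith
end

section
/- Suppose ℋ contains, for every group a ∈ 𝒜, the maximally discriminatory classifiers h_a = 1{A=a} and h̄_a = 1{A≠a}, the fairness constraints are only on false positive rates, B > |𝒜| − 1, and (Q̃, λ̃) is a ν-approximate equilibrium of the Lagrangian game. Then max_{a∈𝒜} |FP_a(Q̃) − FP_0(Q̃)| ≤ γ + 2ν / (B − (|𝒜| − 1)). -/
/-!
Write `d_b = FP_b(Q̃) − FP_0(Q̃)`. Mixing `Q̃` with mass `(−d_b − γ)⁺` on `h_b` and `(d_b − γ)⁺`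
on `h̄_b` for every `b ≠ 0` and renormalising gives a classifier that satisfies all constraints
and whose error exceeds that of `Q̃` by at most `S = ∑_b (|d_b| − γ)⁺`. Since `Q̃` is a
`ν`-best response, `L(Q̃, λ̃) ≤ err(Q̃) + S + ν`; since `λ̃` is a `ν`-best response, comparing with
the dual putting all its mass `B` on a constraint of group `b` gives
`L(Q̃, λ̃) ≥ err(Q̃) + B (|d_b| − γ) − ν`. So `B t_b ≤ S + 2ν` for `t_b = (|d_b| − γ)⁺`; summing
over the `|𝒜| − 1` groups bounds `S`, and then `t_b ≤ 2ν / (B − (|𝒜| − 1))`.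
-/

open Finset

/-- Empirical false positive rate on group `a` of the predictions `pred`. -/
noncomputable def FPrate10 {m : ℕ} {𝒜 : Type*} [Fintype 𝒜] [DecidableEq 𝒜]
    (A : Fin m → 𝒜) (Ys : Fin m → Bool) (pred : Fin m → Bool) (a : 𝒜) : ℝ :=
  ((univ.filter fun i => A i = a ∧ Ys i = false ∧ pred i = true).card : ℝ) /
    ((univ.filter fun i => A i = a ∧ Ys i = false).card : ℝ)

/-- Empirical error of the predictions `pred`. -/
noncomputable def errRate10 {m : ℕ} (Ys pred : Fin m → Bool) : ℝ :=
  ((univ.filter fun i => pred i ≠ Ys i).card : ℝ) / m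

open Matrix

section Rates

variable {m : ℕ} {𝒜 : Type*} [Fintype 𝒜] [DecidableEq 𝒜]

lemma errRate10_nonneg (Ys pred : Fin m → Bool) : 0 ≤ errRate10 Ys pred := by
  unfold errRate10; positivity

lemma errRate10_le_one (Ys pred : Fin m → Bool) : errRate10 Ys pred ≤ 1 := by
  unfold errRate10
  apply div_le_one_of_le₀ _ (Nat.cast_nonneg m)
  exact_mod_cast (card_filter_le _ _).trans_eq (card_fin m)

lemma FPrate10_of_eq_decide (A : Fin m → 𝒜) (Ys pred : Fin m → Bool) (P : 𝒜 → Prop)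
    [DecidablePred P] (hpred : ∀ i, pred i = decide (P (A i))) {b : 𝒜}
    (hb : (univ.filter fun i => A i = b ∧ Ys i = false).Nonempty) :
    FPrate10 A Ys pred b = if P b then 1 else 0 := by
  have hpos : (0 : ℝ) < #(univ.filter fun i => A i = b ∧ Ys i = false) := by
    exact_mod_cast hb.card_pos
  unfold FPrate10
  split_ifs with hPb
  · have hgroup : ∀ i ∈ univ,
        (A i = b ∧ Ys i = false ∧ pred i = true ↔ A i = b ∧ Ys i = false) := fun i _ => by
      rw [hpred i, decide_eq_true_iff]
      exact ⟨fun h => ⟨h.1, h.2.1⟩, fun h => ⟨h.1, h.2, h.1 ▸ hPb⟩⟩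
    rw [filter_congr hgroup, div_self hpos.ne']
  · have hempty : ∀ i ∈ univ, ¬(A i = b ∧ Ys i = false ∧ pred i = true) :=
      fun i _ ⟨hAi, _, hi⟩ => hPb (hAi ▸ of_decide_eq_true ((hpred i).symm.trans hi))
    rw [filter_false_of_mem hempty, card_empty, Nat.cast_zero, zero_div]

lemma FPrate10_sub_of_eq_decide_eq (A : Fin m → 𝒜) (Ys pred : Fin m → Bool) {a0 b c : 𝒜}
    (hpred : ∀ i, pred i = decide (A i = c)) (hc : c ≠ a0)
    (hb : (univ.filter fun i => A i = b ∧ Ys i = false).Nonempty)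
    (ha0 : (univ.filter fun i => A i = a0 ∧ Ys i = false).Nonempty) :
    FPrate10 A Ys pred b - FPrate10 A Ys pred a0 = if b = c then 1 else 0 := by
  simp [FPrate10_of_eq_decide A Ys pred (· = c) hpred hb,
    FPrate10_of_eq_decide A Ys pred (· = c) hpred ha0, hc.symm]

lemma FPrate10_sub_of_eq_decide_ne (A : Fin m → 𝒜) (Ys pred : Fin m → Bool) {a0 b c : 𝒜}
    (hpred : ∀ i, pred i = decide (A i ≠ c)) (hc : c ≠ a0)
    (hb : (univ.filter fun i => A i = b ∧ Ys i = false).Nonempty)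
    (ha0 : (univ.filter fun i => A i = a0 ∧ Ys i = false).Nonempty) :
    FPrate10 A Ys pred b - FPrate10 A Ys pred a0 = -if b = c then 1 else 0 := by
  simp only [FPrate10_of_eq_decide A Ys pred (· ≠ c) hpred hb,
    FPrate10_of_eq_decide A Ys pred (· ≠ c) hpred ha0, ne_eq, hc.symm, not_false_eq_true,
    if_true]
  split_ifs <;> norm_num

end Rates

section Arithmetic

lemma card_subtype_ne_cast {α : Type*} [Fintype α] [DecidableEq α] (a : α) :
    (Fintype.card {b // b ≠ a} : ℝ) = Fintype.card α - 1 := by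
  have : Fintype.card {b // b ≠ a} = Fintype.card α - 1 := by
    simp [Fintype.card_subtype_compl]
  rw [this, Nat.cast_sub (Fintype.card_pos_iff.2 ⟨a⟩), Nat.cast_one]

/-- `x + (−x − γ)⁺ − (x − γ)⁺` is `x` clamped to `[−γ, γ]`. -/
lemma abs_clamp_le {x γ : ℝ} (hγ : 0 ≤ γ) : |x + max (-x - γ) 0 - max (x - γ) 0| ≤ γ := by
  rw [abs_le]
  constructor <;> cases max_cases (-x - γ) 0 <;> cases max_cases (x - γ) 0 <;> linarith

lemma max_neg_sub_add_max_sub {x γ : ℝ} (hγ : 0 ≤ γ) :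
    max (-x - γ) 0 + max (x - γ) 0 = max (|x| - γ) 0 := by
  cases abs_cases x <;> cases max_cases (-x - γ) 0 <;> cases max_cases (x - γ) 0 <;>
    cases max_cases (|x| - γ) 0 <;> linarith

lemma mul_max_abs_sub_le {B d γ R : ℝ} (hR : 0 ≤ R) (hpos : B * (d - γ) ≤ R)
    (hneg : B * (-d - γ) ≤ R) : B * max (|d| - γ) 0 ≤ R := by
  rcases max_cases (|d| - γ) 0 with ⟨hmax, -⟩ | ⟨hmax, -⟩ <;> rw [hmax]
  · rcases abs_cases d with ⟨habs, -⟩ | ⟨habs, -⟩ <;> rwa [habs]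
  · rwa [mul_zero]

lemma le_div_of_forall_mul_le_sum_add {ι : Type*} [Fintype ι] {t : ι → ℝ} {B C : ℝ}
    (hB : (Fintype.card ι : ℝ) < B) (h : ∀ b, B * t b ≤ ∑ c, t c + C) (b : ι) :
    t b ≤ C / (B - Fintype.card ι) := by
  set k : ℝ := (Fintype.card ι : ℝ)
  set S := ∑ c, t c
  have hk : 0 ≤ k := Nat.cast_nonneg _
  have hS : B * S ≤ k * (S + C) := by
    have := sum_le_sum fun c (_ : c ∈ univ) => h c
    rwa [← mul_sum, sum_const, card_univ, nsmul_eq_mul] at this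
  have hBt : B * ((B - k) * t b) ≤ B * C := by nlinarith [h b]
  rw [le_div_iff₀ (by linarith)]
  nlinarith [le_of_mul_le_mul_left hBt (by linarith)]

end Arithmetic

section Mixture

variable {ℋ ι : Type*} [Fintype ℋ] [Fintype ι]

lemma sum_smul_single_dotProduct [DecidableEq ℋ] (w : ι → ℝ) (h : ι → ℋ) (f : ℋ → ℝ) :
    (∑ c, w c • Pi.single (h c) (1 : ℝ)) ⬝ᵥ f = ∑ c, w c * f (h c) := by
  simp [sum_dotProduct, smul_dotProduct, single_dotProduct]

theorem exists_mixture_abs_dotProduct_le [DecidableEq ι] {γ : ℝ} (hγ : 0 ≤ γ)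
    (g : ι → ℋ → ℝ) (up down : ι → ℋ)
    (hup : ∀ b c, g c (up b) = if c = b then 1 else 0)
    (hdown : ∀ b c, g c (down b) = -if c = b then 1 else 0)
    {Q : ℋ → ℝ} (hQ0 : 0 ≤ Q) (hQ1 : ∑ h, Q h = 1) {e : ℋ → ℝ} (he0 : 0 ≤ e) (he1 : e ≤ 1) :
    ∃ Q' : ℋ → ℝ, 0 ≤ Q' ∧ ∑ h, Q' h = 1 ∧ (∀ c, |Q' ⬝ᵥ g c| ≤ γ) ∧
      Q' ⬝ᵥ e ≤ Q ⬝ᵥ e + ∑ c, max (|Q ⬝ᵥ g c| - γ) 0 := by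
  classical
  set α : ι → ℝ := fun c => max (-(Q ⬝ᵥ g c) - γ) 0
  set β : ι → ℝ := fun c => max (Q ⬝ᵥ g c - γ) 0
  set P : ℋ → ℝ := ∑ c, α c • Pi.single (up c) 1 + ∑ c, β c • Pi.single (down c) 1
  set S := ∑ c, max (|Q ⬝ᵥ g c| - γ) 0
  have hP : ∀ f, P ⬝ᵥ f = ∑ c, α c * f (up c) + ∑ c, β c * f (down c) := by
    simp [P, add_dotProduct, sum_smul_single_dotProduct]
  have hP0 : 0 ≤ P := by
    refine add_nonneg (sum_nonneg fun c _ => smul_nonneg (le_max_right _ _) ?_)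
      (sum_nonneg fun c _ => smul_nonneg (le_max_right _ _) ?_) <;>
    exact Pi.single_nonneg.2 zero_le_one
  have hPS : P ⬝ᵥ 1 = S := by
    simp [hP, ← sum_add_distrib, α, β, max_neg_sub_add_max_sub hγ, S]
  have hPg : ∀ b, P ⬝ᵥ g b = α b - β b := by simp [hP, hup, hdown, sub_eq_add_neg]
  have hS0 : 0 ≤ S := by positivity
  have hS : 0 < 1 + S := by positivity
  refine ⟨(1 + S)⁻¹ • (Q + P), smul_nonneg (by positivity) (add_nonneg hQ0 hP0), ?_,
    fun c => ?_, ?_⟩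
  · rw [← dotProduct_one, smul_dotProduct, add_dotProduct, hPS, dotProduct_one, hQ1, smul_eq_mul,
      inv_mul_cancel₀ hS.ne']
  · rw [smul_dotProduct, add_dotProduct, hPg, smul_eq_mul, abs_mul, abs_inv, abs_of_pos hS,
      inv_mul_le_iff₀ hS]
    calc |Q ⬝ᵥ g c + (α c - β c)| = |Q ⬝ᵥ g c + α c - β c| := by rw [add_sub_assoc]
      _ ≤ γ := abs_clamp_le hγ
      _ ≤ (1 + S) * γ := le_mul_of_one_le_left hγ (by linarith)
  · have hPe : P ⬝ᵥ e ≤ S := hPS ▸ dotProduct_le_dotProduct_of_nonneg_left he1 hP0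
    have hQe : 0 ≤ Q ⬝ᵥ e := dotProduct_nonneg_of_nonneg hQ0 he0
    rw [smul_dotProduct, add_dotProduct, smul_eq_mul, inv_mul_le_iff₀ hS]
    nlinarith [mul_nonneg hS0 hQe, mul_nonneg hS0 hS0]

end Mixture

section Game

variable {ℋ K ι : Type*} [Fintype K] [Fintype ι]

theorem err_add_mul_cons_le_of_approx_equilibrium
    (err : (ℋ → ℝ) → ℝ) (cons : K → (ℋ → ℝ) → ℝ) (L : (ℋ → ℝ) → (K → ℝ) → ℝ)
    (hL : ∀ Q lam, L Q lam = err Q + ∑ p, lam p * cons p Q) {B ν : ℝ} (hB : 0 ≤ B)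
    {Qtil Q : ℋ → ℝ} {ltil : K → ℝ} (hltil : 0 ≤ ltil) (hbest : L Qtil ltil ≤ L Q ltil + ν)
    (hdual : ∀ lam : K → ℝ, 0 ≤ lam → ∑ p, |lam p| ≤ B → L Qtil ltil ≥ L Qtil lam - ν)
    (hfeas : ∀ p, cons p Q ≤ 0) (p : K) :
    err Qtil + B * cons p Qtil ≤ err Q + 2 * ν := by
  classical
  have hfeasL : L Q ltil ≤ err Q := by
    rw [hL]
    linarith [sum_nonpos fun p (_ : p ∈ univ) => mul_nonpos_of_nonneg_of_nonpos (hltil p) (hfeas p)]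
  have hsingle : L Qtil (Pi.single p B) = err Qtil + B * cons p Qtil := by
    simp [hL, Pi.single_apply]
  have := hdual (Pi.single p B) (Pi.single_nonneg.2 hB)
    (by simp [Pi.single_apply, apply_ite abs, abs_of_nonneg hB])
  linarith

theorem mul_max_abs_sub_le_of_approx_equilibrium
    (err : (ℋ → ℝ) → ℝ) (G : ι → (ℋ → ℝ) → ℝ) (L : (ℋ → ℝ) → (ι × Bool → ℝ) → ℝ) {γ B ν S : ℝ}
    (hL : ∀ Q lam, L Q lam =
      err Q + ∑ p, lam p * (if p.2 then G p.1 Q - γ else -G p.1 Q - γ))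
    (hB : 0 ≤ B) (hν : 0 ≤ ν) (hS : 0 ≤ S)
    {Qtil Q : ℋ → ℝ} {ltil : ι × Bool → ℝ} (hltil : 0 ≤ ltil) (hbest : L Qtil ltil ≤ L Q ltil + ν)
    (hdual : ∀ lam : ι × Bool → ℝ, 0 ≤ lam → ∑ p, |lam p| ≤ B → L Qtil ltil ≥ L Qtil lam - ν)
    (hfeas : ∀ b, |G b Q| ≤ γ) (herr : err Q ≤ err Qtil + S) (b : ι) :
    B * max (|G b Qtil| - γ) 0 ≤ S + 2 * ν := by
  have hvalue := err_add_mul_cons_le_of_approx_equilibrium err _ L hL hB hltil hbest hdual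
    fun p => by have := abs_le.1 (hfeas p.1); split_ifs <;> linarith
  have hpos := hvalue (b, true)
  have hneg := hvalue (b, false)
  simp only [if_true, Bool.false_eq_true, if_false] at hpos hneg
  exact mul_max_abs_sub_le (by positivity) (by linarith) (by linarith)

end Game

/-- if `ℋ` contains the maximally discriminatory classifiers
`h_a = 1{A=a}` and `h̄_a = 1{A≠a}` for every group `a`, the constraints are only
on false positive rates, `B > |𝒜| − 1`, and `(Q̃, λ̃)` is a `ν`-approximate
equilibrium of the Lagrangian game, then every group FP disparity of `Q̃` is at
most `γ + 2ν/(B − (|𝒜| − 1))`. -/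
theorem fp_disparity_with_discriminatory_classifiers
    {m : ℕ} {𝒜 : Type*} [Fintype 𝒜] [DecidableEq 𝒜] {ℋ : Type*} [Fintype ℋ]
    (A : Fin m → 𝒜) (Ys : Fin m → Bool) (eval : ℋ → Fin m → Bool)
    (a0 : 𝒜) (γ B ν : ℝ) (hγ : 0 ≤ γ) (hν : 0 ≤ ν)
    (hB : ((Fintype.card 𝒜 : ℝ) - 1) < B)
    (hgroups : ∀ a : 𝒜, ((univ : Finset (Fin m)).filter
        fun i => A i = a ∧ Ys i = false).Nonempty)
    (hdiscr : ∀ a : 𝒜, ∃ h : ℋ, ∀ i, eval h i = decide (A i = a))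
    (hdiscr' : ∀ a : 𝒜, ∃ h : ℋ, ∀ i, eval h i = decide (A i ≠ a))
    -- the Lagrangian payoff of a mixed classifier `Q` against a dual `lam`
    (L : (ℋ → ℝ) → ({a : 𝒜 // a ≠ a0} × Bool → ℝ) → ℝ)
    (hLdef : ∀ Q lam, L Q lam =
      (∑ h, Q h * errRate10 Ys (eval h)) +
        ∑ p : {a : 𝒜 // a ≠ a0} × Bool, lam p *
          (if p.2 then
              (∑ h, Q h * FPrate10 A Ys (eval h) p.1.1)
                - (∑ h, Q h * FPrate10 A Ys (eval h) a0) - γ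
            else
              (∑ h, Q h * FPrate10 A Ys (eval h) a0)
                - (∑ h, Q h * FPrate10 A Ys (eval h) p.1.1) - γ))
    (Qtil : ℋ → ℝ) (hQtil : (∀ h, 0 ≤ Qtil h) ∧ ∑ h, Qtil h = 1)
    (ltil : {a : 𝒜 // a ≠ a0} × Bool → ℝ)
    (hltil : (∀ p, 0 ≤ ltil p) ∧ ∑ p, |ltil p| ≤ B)
    (heq1 : ∀ Q : ℋ → ℝ, (∀ h, 0 ≤ Q h) → (∑ h, Q h = 1) →
      L Qtil ltil ≤ L Q ltil + ν)
    (heq2 : ∀ lam : {a : 𝒜 // a ≠ a0} × Bool → ℝ,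
      (∀ p, 0 ≤ lam p) → (∑ p, |lam p| ≤ B) →
      L Qtil ltil ≥ L Qtil lam - ν) :
    ∀ a : 𝒜,
      |(∑ h, Qtil h * FPrate10 A Ys (eval h) a)
          - (∑ h, Qtil h * FPrate10 A Ys (eval h) a0)|
        ≤ γ + 2 * ν / (B - ((Fintype.card 𝒜 : ℝ) - 1)) := by
  classical
  intro a
  by_cases ha : a = a0
  · subst ha
    rw [sub_self, abs_zero]
    have : 0 < B - (Fintype.card 𝒜 - 1) := by linarith
    positivity
  have hB' : (Fintype.card {b // b ≠ a0} : ℝ) < B := by rwa [card_subtype_ne_cast]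
  choose up hup using hdiscr
  choose down hdown using hdiscr'
  let gap (b : {b // b ≠ a0}) : ℋ → ℝ :=
    (fun h => FPrate10 A Ys (eval h) b) - fun h => FPrate10 A Ys (eval h) a0
  have hgap (Q : ℋ → ℝ) (b : {b // b ≠ a0}) : Q ⬝ᵥ gap b =
      (∑ h, Q h * FPrate10 A Ys (eval h) b) - ∑ h, Q h * FPrate10 A Ys (eval h) a0 :=
    dotProduct_sub _ _ _
  obtain ⟨Q, hQ0, hQ1, hgapQ, herrQ⟩ := exists_mixture_abs_dotProduct_le hγ gap (up ·) (down ·)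
    (fun b c => by
      simp [gap, Subtype.ext_iff,
        FPrate10_sub_of_eq_decide_eq A Ys _ (hup b) b.2 (hgroups c) (hgroups a0)])
    (fun b c => by
      simp [gap, Subtype.ext_iff,
        FPrate10_sub_of_eq_decide_ne A Ys _ (hdown b) b.2 (hgroups c) (hgroups a0)])
    hQtil.1 hQtil.2 (e := fun h => errRate10 Ys (eval h)) (fun h => errRate10_nonneg _ _)
    (fun h => errRate10_le_one _ _)
  have hbound := mul_max_abs_sub_le_of_approx_equilibrium
    (fun Q => ∑ h, Q h * errRate10 Ys (eval h)) (fun b Q => Q ⬝ᵥ gap b) L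
    (fun Q lam => by rw [hLdef]; simp only [hgap, neg_sub]) ((Nat.cast_nonneg _).trans hB'.le) hν
    (sum_nonneg fun c _ => le_max_right _ _) hltil.1 (heq1 Q hQ0 hQ1) heq2 hgapQ herrQ
  have hle := (le_max_left _ _).trans (le_div_of_forall_mul_le_sum_add hB' hbound ⟨a, ha⟩)
  rw [card_subtype_ne_cast, hgap] at hle
  linarith
end

section
/- Consider binary classification with unprotected attribute X ∈ {U,V} and protected attribute A ∈ {R,B}, hypothesis class ℋ = {h_0, h_U} with h_0 ≡ 0 and h_U(X,A) = 1{X=U}, and define f(D) as the minimum empirical error over randomized classifiers Q ∈ Δ(ℋ) subject to |FP_R(Q) − FP_B(Q)| ≤ γ on dataset D. For γ > 1/m there exist neighboring datasets D, D' of size m (differing in one record) with |f(D) − f(D')| ≥ Ω(1/(γm)); concretely, for the dataset D with m/2 points (R,V,0), m/4 points (B,U,1), m(1−γ)/4 points (B,V,0), m γ/4 points (B,U,0), and D' obtained by changing one (B,V,0) record to (B,U,0), one has f(D) ≤ γ/4 and f(D') = γ/4 + 1/(4 + γm). -/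
/-!
On these datasets the red group has no negatives with `X = U`, so the disparity of the mixture
with weight `α` on `h_U` is the blue false positive rate `iα/k`, where `i` counts the `(B,U,0)`
points; the constraint therefore caps `α` at `γk/i`. The error decreases in `α`, so the optimum
sits at `α = min 1 (γk/i)`: on `D` this is `1`, on `D'` it drops to `j/(j+1)`, and the weight
lost on the `k` points `(B,U,1)` costs `1/(4(j+1))`.
-/

open Finset

namespace Stmt11

/-- A dataset over `(A, X, Y) ∈ {R,B} × {U,V} × {0,1}` given by counts;
`A = true` means `R`, `X = true` means `U`, `Y = true` means label `1`. -/
def Cnt := Bool × Bool × Bool → ℕ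

/-- Total dataset size. -/
def total (cnt : Cnt) : ℕ := ∑ r : Bool × Bool × Bool, cnt r

/-- Probability that the mixture `α·h_U + (1−α)·h_0` predicts `1` on a point
with unprotected attribute `x` (`h_U(X,A) = 1{X = U}`, `h_0 ≡ 0`). -/
def predProb (α : ℝ) (x : Bool) : ℝ := if x then α else 0

/-- Empirical false positive rate on group `a` of the mixture with weight `α`
on `h_U`. -/
noncomputable def FP (cnt : Cnt) (α : ℝ) (a : Bool) : ℝ :=
  (∑ x : Bool, (cnt (a, x, false) : ℝ) * predProb α x) /
    (∑ x : Bool, (cnt (a, x, false) : ℝ))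

/-- Empirical error of the mixture with weight `α` on `h_U`. -/
noncomputable def err (cnt : Cnt) (α : ℝ) : ℝ :=
  (∑ r : Bool × Bool × Bool, (cnt r : ℝ) *
      (if r.2.2 then 1 - predProb α r.2.1 else predProb α r.2.1)) / total cnt

/-- Minimum empirical error over randomized classifiers in `Δ({h_0, h_U})`
subject to the false positive rate disparity constraint `|FP_R − FP_B| ≤ γ`. -/
noncomputable def fOpt (cnt : Cnt) (γ : ℝ) : ℝ :=
  sInf { e : ℝ | ∃ α ∈ Set.Icc (0:ℝ) 1,
    |FP cnt α true - FP cnt α false| ≤ γ ∧ e = err cnt α }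

/-- `D` is `hardData k j` and `D'` is `hardData k (j + 1)`: `i` counts the `(B,U,0)` records. -/
def hardData (k i : ℕ) : Cnt := fun r =>
  if r = (true, false, false) then 2 * k
  else if r = (false, true, true) then k
  else if r = (false, false, false) then k - i
  else if r = (false, true, false) then i
  else 0

theorem fOpt_eq_err_of_isGreatest {cnt : Cnt} {γ α₀ : ℝ}
    (hanti : AntitoneOn (err cnt) (Set.Icc 0 1))
    (hα₀ : IsGreatest {α ∈ Set.Icc (0 : ℝ) 1 | |FP cnt α true - FP cnt α false| ≤ γ} α₀) :
    fOpt cnt γ = err cnt α₀ := by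
  obtain ⟨⟨hα₀mem, hα₀fair⟩, hα₀max⟩ := hα₀
  refine IsLeast.csInf_eq ⟨⟨α₀, hα₀mem, hα₀fair, rfl⟩, ?_⟩
  rintro _ ⟨α, hα, hfair, rfl⟩
  exact hanti hα hα₀mem (hα₀max ⟨hα, hfair⟩)

section hardData

variable {k i : ℕ} {α : ℝ}

theorem FP_hardData_true : FP (hardData k i) α true = 0 := by
  simp [FP, hardData, predProb]

theorem FP_hardData_false (hik : i ≤ k) : FP (hardData k i) α false = i * α / k := by
  simp [FP, hardData, predProb, Nat.cast_sub hik]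

theorem err_hardData (hik : i ≤ k) :
    err (hardData k i) α = (k - (k - i) * α) / (4 * k) := by
  simp only [err, total, hardData, predProb, Nat.cast_ite, Nat.cast_mul, Nat.cast_ofNat,
    Nat.cast_sub hik, CharP.cast_eq_zero, mul_ite, ite_mul, zero_mul, mul_zero,
    Fintype.sum_prod_type, Fintype.univ_bool, Prod.mk.injEq, mem_singleton, Bool.true_eq_false,
    Bool.false_eq_true, not_false_eq_true, sum_insert, sum_singleton, ↓reduceIte, and_false,
    and_true, add_zero, zero_add, Nat.cast_add, add_add_sub_cancel]
  ring_nf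

theorem fairSet_hardData {γ : ℝ} (hi : 0 < i) (hik : i ≤ k) :
    {α ∈ Set.Icc (0 : ℝ) 1 | |FP (hardData k i) α true - FP (hardData k i) α false| ≤ γ} =
      Set.Icc 0 (min 1 (γ * k / i)) := by
  have hi' : (0 : ℝ) < i := by exact_mod_cast hi
  have hk : (0 : ℝ) < k := by exact_mod_cast hi.trans_le hik
  ext α
  simp only [Set.mem_ofPred_eq, Set.mem_Icc, le_min_iff, FP_hardData_true, FP_hardData_false hik,
    zero_sub, abs_neg, le_div_iff₀ hi']
  constructor
  · rintro ⟨⟨h0, h1⟩, hfair⟩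
    rw [abs_of_nonneg (by positivity), div_le_iff₀ hk] at hfair
    exact ⟨h0, h1, by linarith⟩
  · rintro ⟨h0, h1, hfair⟩
    rw [abs_of_nonneg (by positivity), div_le_iff₀ hk]
    exact ⟨⟨h0, h1⟩, by linarith⟩

theorem fOpt_hardData {γ : ℝ} (hi : 0 < i) (hik : i ≤ k) (hγ : 0 ≤ γ) :
    fOpt (hardData k i) γ = (k - (k - i) * min 1 (γ * k / i)) / (4 * k) := by
  have hki : (0 : ℝ) ≤ k - i := sub_nonneg.mpr (by exact_mod_cast hik)
  have hanti : AntitoneOn (err (hardData k i)) (Set.Icc 0 1) := by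
    intro a _ b _ hab
    simp only [err_hardData hik]
    gcongr
  rw [fOpt_eq_err_of_isGreatest hanti ((fairSet_hardData hi hik).symm ▸ isGreatest_Icc
    (le_min zero_le_one (by positivity))), err_hardData hik]

end hardData

theorem sensitivity_lower_bound_general (k j : ℕ) (hj : 1 ≤ j) (hjk : j < k)
    (γ : ℝ) (hγ : γ = (j : ℝ) / k) (m : ℕ) (hm : m = 4 * k)
    (D D' : Cnt)
    (hD : D = fun r =>
      if r = (true, false, false) then 2 * k
      else if r = (false, true, true) then k
      else if r = (false, false, false) then k - j
      else if r = (false, true, false) then j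
      else 0)
    (hD' : D' = fun r =>
      if r = (true, false, false) then 2 * k
      else if r = (false, true, true) then k
      else if r = (false, false, false) then k - j - 1
      else if r = (false, true, false) then j + 1
      else 0) :
    fOpt D γ ≤ γ / 4 ∧
    fOpt D' γ = γ / 4 + 1 / (4 + γ * m) ∧
    1 / (2 * γ * m) ≤ |fOpt D γ - fOpt D' γ| := by
  have hk : (0 : ℝ) < k := by exact_mod_cast (show 0 < k by omega)
  have hj' : (1 : ℝ) ≤ j := by exact_mod_cast hj
  have hγ0 : 0 ≤ γ := by rw [hγ]; positivity
  have hγk : γ * k = j := by rw [hγ]; field_simp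
  have hγm : γ * m = 4 * j := by rw [hm]; push_cast; linarith
  have hfD : fOpt D γ = γ / 4 := by
    rw [show D = hardData k j from hD, fOpt_hardData (by omega) hjk.le hγ0, hγk,
      div_self (by positivity), min_self, hγ]
    ring
  have hfD' : fOpt D' γ = γ / 4 + 1 / (4 + γ * m) := by
    rw [show D' = hardData k (j + 1) by rw [hD', Nat.sub_sub]; rfl,
      fOpt_hardData (by omega) hjk hγ0, hγk, min_eq_right (by rw [div_le_one (by positivity)]; push_cast; linarith), hγm, hγ]
    push_cast
    field_simp
    ring
  refine ⟨hfD.le, hfD', ?_⟩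
  rw [hfD, hfD', sub_add_cancel_left, abs_neg, abs_of_pos (by positivity), mul_assoc, hγm]
  exact one_div_le_one_div_of_le (by positivity) (by linarith)

/-- with `ℋ = {h_0, h_U}`, the fair-optimal error `f` has
sensitivity `Ω(1/(γm))`.  Concretely, for `m = 4k`, `γ = j/k > 1/m`, the
dataset `D` with `m/2` points `(R,V,0)`, `m/4` points `(B,U,1)`,
`m(1−γ)/4` points `(B,V,0)` and `mγ/4` points `(B,U,0)`, and `D'` obtained by
changing one `(B,V,0)` record into `(B,U,0)`, satisfy `f(D) ≤ γ/4`,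
`f(D') = γ/4 + 1/(4 + γm)`, and `|f(D) − f(D')| ≥ 1/(2γm)`. -/
theorem sensitivity_lower_bound (k j : ℕ) (hj : 1 ≤ j) (hjk : j < k)
    (γ : ℝ) (hγ : γ = (j : ℝ) / k) (m : ℕ) (hm : m = 4 * k)
    (hγm : 1 / (m : ℝ) < γ)
    (D D' : Cnt)
    (hD : D = fun r =>
      if r = (true, false, false) then 2 * k
      else if r = (false, true, true) then k
      else if r = (false, false, false) then k - j
      else if r = (false, true, false) then j
      else 0)
    (hD' : D' = fun r =>
      if r = (true, false, false) then 2 * k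
      else if r = (false, true, true) then k
      else if r = (false, false, false) then k - j - 1
      else if r = (false, true, false) then j + 1
      else 0) :
    fOpt D γ ≤ γ / 4 ∧
    fOpt D' γ = γ / 4 + 1 / (4 + γ * m) ∧
    1 / (2 * γ * m) ≤ |fOpt D γ - fOpt D' γ| :=
  sensitivity_lower_bound_general k j hj hjk γ hγ m hm D D' hD hD'

end Stmt11
end

section
/- In the same two-attribute setting, if ℋ = {h_0, h_U, h_R, h_B} where h_R(X,A) = 1{A=R} and h_B(X,A) = 1{A=B}, and we restrict to datasets where the empirical mass q̂_{a,0} of each group-a negative class is at least a constant C > 0, then the sensitivity of f (the minimum fair empirical error) is O(1/m): for any neighboring datasets D, D' with min_a q̂_{a0} ≥ C, |f(D) − f(D')| ≤ 1/m + 2/(Cm). -/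
open Finset

namespace Stmt12

/-- A dataset: `m` records `(A, X, Y)` with `A = true` meaning group `R`,
`X = true` meaning `U`, and `Y` the binary label. -/
def Dataset (m : ℕ) := Fin m → Bool × Bool × Bool

/-- Probability that the randomized classifier with weights
`w 0` on `h_0 ≡ 0`, `w 1` on `h_U = 1{X=U}`, `w 2` on `h_R = 1{A=R}`,
`w 3` on `h_B = 1{A=B}` predicts `1` on a point with attributes `(a, x)`. -/
def predProb (w : Fin 4 → ℝ) (a x : Bool) : ℝ :=
  w 1 * (if x then 1 else 0) + w 2 * (if a then 1 else 0) +
    w 3 * (if a then 0 else 1)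

/-- Empirical false positive rate on group `a`. -/
noncomputable def FP {m : ℕ} (D : Dataset m) (w : Fin 4 → ℝ) (a : Bool) : ℝ :=
  (∑ i ∈ univ.filter (fun i => (D i).1 = a ∧ (D i).2.2 = false),
      predProb w (D i).1 (D i).2.1) /
    ((univ.filter fun i => (D i).1 = a ∧ (D i).2.2 = false).card : ℝ)

/-- Empirical error. -/
noncomputable def err {m : ℕ} (D : Dataset m) (w : Fin 4 → ℝ) : ℝ :=
  (∑ i, (if (D i).2.2 then 1 - predProb w (D i).1 (D i).2.1
          else predProb w (D i).1 (D i).2.1)) / m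

/-- Minimum fair empirical error over `Δ({h_0, h_U, h_R, h_B})`. -/
noncomputable def fOpt {m : ℕ} (D : Dataset m) (γ : ℝ) : ℝ :=
  sInf { e : ℝ | ∃ w : Fin 4 → ℝ, (∀ i, 0 ≤ w i) ∧ (∑ i, w i = 1) ∧
    |FP D w true - FP D w false| ≤ γ ∧ e = err D w }

-- auxiliary lemmas
lemma predProb_nonneg (w : Fin 4 → ℝ) (hw : ∀ i, 0 ≤ w i) (a x : Bool) :
    0 ≤ predProb w a x := by
  have h1 := hw 1; have h2 := hw 2; have h3 := hw 3
  unfold predProb; cases a <;> cases x <;> simp <;> linarith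

lemma predProb_le_one (w : Fin 4 → ℝ) (hw : ∀ i, 0 ≤ w i) (hs : ∑ i, w i = 1)
    (a x : Bool) : predProb w a x ≤ 1 := by
  have h0 := hw 0; have h1 := hw 1; have h2 := hw 2; have h3 := hw 3
  rw [Fin.sum_univ_four] at hs
  unfold predProb; cases a <;> cases x <;> simp <;> linarith

lemma err_term_mem (w : Fin 4 → ℝ) (hw : ∀ i, 0 ≤ w i) (hs : ∑ i, w i = 1)
    (a x : Bool) (y : Bool) :
    0 ≤ (if y then 1 - predProb w a x else predProb w a x) ∧
      (if y then 1 - predProb w a x else predProb w a x) ≤ 1 := by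
  have := predProb_nonneg w hw a x
  have := predProb_le_one w hw hs a x
  cases y <;> simp <;> constructor <;> linarith

lemma err_nonneg {m : ℕ} (D : Dataset m) (w : Fin 4 → ℝ) (hw : ∀ i, 0 ≤ w i)
    (hs : ∑ i, w i = 1) : 0 ≤ err D w := by
  unfold err
  apply div_nonneg _ (Nat.cast_nonneg m)
  exact Finset.sum_nonneg fun i _ => (err_term_mem w hw hs _ _ _).1

lemma err_le_one {m : ℕ} (hm : 0 < m) (D : Dataset m) (w : Fin 4 → ℝ)
    (hw : ∀ i, 0 ≤ w i) (hs : ∑ i, w i = 1) : err D w ≤ 1 := by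
  unfold err
  rw [div_le_one (by exact_mod_cast hm)]
  calc (∑ i, (if (D i).2.2 then 1 - predProb w (D i).1 (D i).2.1
          else predProb w (D i).1 (D i).2.1))
      ≤ ∑ _i : Fin m, (1:ℝ) :=
        Finset.sum_le_sum fun i _ => (err_term_mem w hw hs _ _ _).2
    _ = m := by simp

noncomputable def eB : Fin 4 → ℝ := fun j => if j = 3 then 1 else 0
noncomputable def eR : Fin 4 → ℝ := fun j => if j = 2 then 1 else 0

lemma eB_nonneg : ∀ j, 0 ≤ eB j := by intro j; unfold eB; split <;> norm_num
lemma eR_nonneg : ∀ j, 0 ≤ eR j := by intro j; unfold eR; split <;> norm_num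
lemma eB_sum : ∑ j, eB j = 1 := by simp [eB, Fin.sum_univ_four]
lemma eR_sum : ∑ j, eR j = 1 := by simp [eR, Fin.sum_univ_four]

lemma predProb_eB (a x : Bool) : predProb eB a x = if a then 0 else 1 := by
  cases a <;> cases x <;> simp [predProb, eB]
lemma predProb_eR (a x : Bool) : predProb eR a x = if a then 1 else 0 := by
  cases a <;> cases x <;> simp [predProb, eR]

lemma predProb_mix (t : ℝ) (w v : Fin 4 → ℝ) (a x : Bool) :
    predProb (fun j => (1 - t) * w j + t * v j) a x
      = (1 - t) * predProb w a x + t * predProb v a x := by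
  unfold predProb; ring

lemma FP_mix {m : ℕ} (D : Dataset m) (t : ℝ) (w v : Fin 4 → ℝ) (a : Bool) :
    FP D (fun j => (1 - t) * w j + t * v j) a
      = (1 - t) * FP D w a + t * FP D v a := by
  unfold FP
  simp only [predProb_mix]
  rw [Finset.sum_add_distrib, ← Finset.mul_sum, ← Finset.mul_sum, add_div,
    mul_div_assoc, mul_div_assoc]

lemma err_mix {m : ℕ} (D : Dataset m) (t : ℝ) (w v : Fin 4 → ℝ) :
    err D (fun j => (1 - t) * w j + t * v j)
      = (1 - t) * err D w + t * err D v := by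
  unfold err
  simp only [predProb_mix]
  have h : ∀ i : Fin m, (if (D i).2.2 = true
        then 1 - ((1 - t) * predProb w (D i).1 (D i).2.1 + t * predProb v (D i).1 (D i).2.1)
        else (1 - t) * predProb w (D i).1 (D i).2.1 + t * predProb v (D i).1 (D i).2.1)
      = (1 - t) * (if (D i).2.2 = true then 1 - predProb w (D i).1 (D i).2.1 else predProb w (D i).1 (D i).2.1)
        + t * (if (D i).2.2 = true then 1 - predProb v (D i).1 (D i).2.1 else predProb v (D i).1 (D i).2.1) := by
    intro i
    by_cases hy : (D i).2.2 = true
    · simp only [if_pos hy]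
      ring
    · simp only [if_neg hy]
  rw [Finset.sum_congr rfl fun i _ => h i, Finset.sum_add_distrib, ← Finset.mul_sum,
    ← Finset.mul_sum, add_div, mul_div_assoc, mul_div_assoc]

lemma FP_const {m : ℕ} (D : Dataset m) (v : Fin 4 → ℝ) (a : Bool) (c : ℝ)
    (hc : ∀ x, predProb v a x = c)
    (hcard : (0:ℝ) < ((univ.filter fun i => (D i).1 = a ∧ (D i).2.2 = false).card : ℝ)) :
    FP D v a = c := by
  unfold FP
  rw [Finset.sum_congr rfl (fun i hi => by
    rw [(Finset.mem_filter.mp hi).2.1, hc (D i).2.1])]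
  rw [Finset.sum_const, nsmul_eq_mul, mul_comm, mul_div_assoc, div_self hcard.ne', mul_one]

lemma abs_div_sub_div_le (S S' n n' c : ℝ) (hc : 0 < c) (hn : c ≤ n) (hn' : c ≤ n')
    (hS0 : 0 ≤ S) (hS'0 : 0 ≤ S') (hSn : S ≤ n) (hS'n' : S' ≤ n')
    (h : (n' = n ∧ |S - S'| ≤ 1) ∨ (n' = n + 1 ∧ S ≤ S' ∧ S' ≤ S + 1)
        ∨ (n = n' + 1 ∧ S' ≤ S ∧ S ≤ S' + 1)) :
    |S / n - S' / n'| ≤ 1 / c := by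
  have hn0 : (0:ℝ) < n := lt_of_lt_of_le hc hn
  have hn'0 : (0:ℝ) < n' := lt_of_lt_of_le hc hn'
  rw [div_sub_div _ _ hn0.ne' hn'0.ne', abs_div, abs_of_pos (mul_pos hn0 hn'0),
    div_le_div_iff₀ (mul_pos hn0 hn'0) hc]
  rcases h with ⟨h1, h2⟩ | ⟨h1, h2, h3⟩ | ⟨h1, h2, h3⟩
  · rcases abs_le.mp h2 with ⟨hl, hr⟩
    have hB : |S * n' - n * S'| ≤ n := by
      rw [h1, abs_le]
      constructor <;> nlinarith [mul_le_mul_of_nonneg_left hr hn0.le,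
        mul_le_mul_of_nonneg_left (show S' - S ≤ 1 by linarith) hn0.le]
    calc |S * n' - n * S'| * c ≤ n * c := mul_le_mul_of_nonneg_right hB hc.le
      _ ≤ 1 * (n * n') := by nlinarith
  · have hB : |S * n' - n * S'| ≤ n := by
      rw [h1, abs_le]
      constructor <;> nlinarith [mul_nonneg hn0.le (sub_nonneg.mpr h2),
        mul_le_mul_of_nonneg_left (show S' - S ≤ 1 by linarith) hn0.le]
    calc |S * n' - n * S'| * c ≤ n * c := mul_le_mul_of_nonneg_right hB hc.le
      _ ≤ 1 * (n * n') := by nlinarith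
  · have hB : |S * n' - n * S'| ≤ n' := by
      rw [h1, abs_le]
      constructor <;> nlinarith [mul_nonneg hn'0.le (sub_nonneg.mpr h2),
        mul_le_mul_of_nonneg_left (show S - S' ≤ 1 by linarith) hn'0.le]
    calc |S * n' - n * S'| * c ≤ n' * c := mul_le_mul_of_nonneg_right hB hc.le
      _ ≤ 1 * (n * n') := by nlinarith
lemma FP_perturb {m : ℕ} (D D' : Dataset m) (i0 : Fin m)
    (hne : ∀ i, i ≠ i0 → D i = D' i) (w : Fin 4 → ℝ)
    (hw0 : ∀ j, 0 ≤ w j) (hw1 : ∑ j, w j = 1) (a : Bool) (c : ℝ) (hc : 0 < c)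
    (hn : c ≤ ((univ.filter fun i => (D i).1 = a ∧ (D i).2.2 = false).card : ℝ))
    (hn' : c ≤ ((univ.filter fun i => (D' i).1 = a ∧ (D' i).2.2 = false).card : ℝ)) :
    |FP D w a - FP D' w a| ≤ 1 / c := by
  classical
  set T : Finset (Fin m) := univ.filter (fun i => (D i).1 = a ∧ (D i).2.2 = false) with hT
  set T' : Finset (Fin m) := univ.filter (fun i => (D' i).1 = a ∧ (D' i).2.2 = false) with hT'
  set f : Fin m → ℝ := fun i => predProb w (D i).1 (D i).2.1 with hf
  set g : Fin m → ℝ := fun i => predProb w (D' i).1 (D' i).2.1 with hg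
  have hfg : ∀ i, i ≠ i0 → f i = g i := by
    intro i hi; simp only [hf, hg, hne i hi]
  have hf01 : ∀ i, 0 ≤ f i ∧ f i ≤ 1 := fun i =>
    ⟨predProb_nonneg w hw0 _ _, predProb_le_one w hw0 hw1 _ _⟩
  have hg01 : ∀ i, 0 ≤ g i ∧ g i ≤ 1 := fun i =>
    ⟨predProb_nonneg w hw0 _ _, predProb_le_one w hw0 hw1 _ _⟩
  have hET : T.erase i0 = T'.erase i0 := by
    ext i
    simp only [Finset.mem_erase, hT, hT', Finset.mem_filter, Finset.mem_univ, true_and]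
    refine and_congr_right fun hi => ?_
    rw [hne i hi]
  have hsumE : ∑ i ∈ T.erase i0, f i = ∑ i ∈ T'.erase i0, g i := by
    rw [hET]
    exact Finset.sum_congr rfl fun i hi => hfg i (Finset.ne_of_mem_erase hi)
  have hFP : FP D w a = (∑ i ∈ T, f i) / (T.card : ℝ) := rfl
  have hFP' : FP D' w a = (∑ i ∈ T', g i) / (T'.card : ℝ) := rfl
  rw [hFP, hFP']
  have hsum_nonneg : 0 ≤ ∑ i ∈ T, f i := Finset.sum_nonneg fun i _ => (hf01 i).1
  have hsum_nonneg' : 0 ≤ ∑ i ∈ T', g i := Finset.sum_nonneg fun i _ => (hg01 i).1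
  have hsum_le : ∑ i ∈ T, f i ≤ (T.card : ℝ) := by
    calc ∑ i ∈ T, f i ≤ ∑ _i ∈ T, (1:ℝ) := Finset.sum_le_sum fun i _ => (hf01 i).2
      _ = T.card := by simp
  have hsum_le' : ∑ i ∈ T', g i ≤ (T'.card : ℝ) := by
    calc ∑ i ∈ T', g i ≤ ∑ _i ∈ T', (1:ℝ) := Finset.sum_le_sum fun i _ => (hg01 i).2
      _ = T'.card := by simp
  apply abs_div_sub_div_le _ _ _ _ c hc hn hn' hsum_nonneg hsum_nonneg' hsum_le hsum_le'
  by_cases hi : i0 ∈ T <;> by_cases hi' : i0 ∈ T'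
  · left
    constructor
    · rw [← Finset.card_erase_add_one hi, ← Finset.card_erase_add_one hi', hET]
    · rw [← Finset.sum_erase_add T f hi, ← Finset.sum_erase_add T' g hi', hsumE]
      have := (hf01 i0).1; have := (hf01 i0).2
      have := (hg01 i0).1; have := (hg01 i0).2
      rw [abs_le]
      refine ⟨by push_cast; linarith, by push_cast; linarith⟩
  · right; right
    have hT'e : T'.erase i0 = T' := Finset.erase_eq_of_notMem hi'
    refine ⟨?_, ?_, ?_⟩
    · rw [← Finset.card_erase_add_one hi, hET, hT'e]; push_cast; ring
    · rw [← Finset.sum_erase_add T f hi, hsumE, hT'e]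
      have := (hf01 i0).1; linarith
    · rw [← Finset.sum_erase_add T f hi, hsumE, hT'e]
      have := (hf01 i0).2; linarith
  · right; left
    have hTe : T.erase i0 = T := Finset.erase_eq_of_notMem hi
    refine ⟨?_, ?_, ?_⟩
    · rw [← Finset.card_erase_add_one hi', ← hET, hTe]; push_cast; ring
    · rw [← Finset.sum_erase_add T' g hi', ← hsumE, hTe]
      have := (hg01 i0).1; linarith
    · rw [← Finset.sum_erase_add T' g hi', ← hsumE, hTe]
      have := (hg01 i0).2; linarith
  · left
    have hTe : T.erase i0 = T := Finset.erase_eq_of_notMem hi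
    have hT'e : T'.erase i0 = T' := Finset.erase_eq_of_notMem hi'
    constructor
    · rw [← hTe, ← hT'e, hET]
    · rw [← hTe, ← hT'e, hsumE]
      simp
lemma err_perturb {m : ℕ} (hm : 0 < m) (D D' : Dataset m) (i0 : Fin m)
    (hne : ∀ i, i ≠ i0 → D i = D' i) (w : Fin 4 → ℝ)
    (hw0 : ∀ j, 0 ≤ w j) (hw1 : ∑ j, w j = 1) :
    |err D w - err D' w| ≤ 1 / m := by
  classical
  set F : Fin m → ℝ := fun i => if (D i).2.2 then 1 - predProb w (D i).1 (D i).2.1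
      else predProb w (D i).1 (D i).2.1 with hF
  set G : Fin m → ℝ := fun i => if (D' i).2.2 then 1 - predProb w (D' i).1 (D' i).2.1
      else predProb w (D' i).1 (D' i).2.1 with hG
  have hFeq : ∀ i, i ≠ i0 → F i = G i := by
    intro i hi; simp only [hF, hG, hne i hi]
  have hdiff : (∑ i, F i) - (∑ i, G i) = F i0 - G i0 := by
    rw [← Finset.sum_erase_add univ F (Finset.mem_univ i0),
      ← Finset.sum_erase_add univ G (Finset.mem_univ i0),
      Finset.sum_congr rfl fun i hi => hFeq i (Finset.ne_of_mem_erase hi)]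
    ring
  have herr : err D w - err D' w = (F i0 - G i0) / m := by
    unfold err
    rw [div_sub_div_same, hdiff]
  rw [herr, abs_div, abs_of_pos (show (0:ℝ) < (m:ℝ) by exact_mod_cast hm)]
  gcongr
  obtain ⟨h1, h2⟩ := err_term_mem w hw0 hw1 (D i0).1 (D i0).2.1 (D i0).2.2
  obtain ⟨h3, h4⟩ := err_term_mem w hw0 hw1 (D' i0).1 (D' i0).2.1 (D' i0).2.2
  simp only [hF, hG]
  rw [abs_le]
  exact ⟨by linarith, by linarith⟩
noncomputable def w0 : Fin 4 → ℝ := fun j => if j = 0 then 1 else 0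

lemma w0_nonneg : ∀ j, 0 ≤ w0 j := by intro j; unfold w0; split <;> norm_num
lemma w0_sum : ∑ j, w0 j = 1 := by simp [w0, Fin.sum_univ_four]
lemma predProb_w0 (a x : Bool) : predProb w0 a x = 0 := by
  cases a <;> cases x <;> simp [predProb, w0]
lemma FP_w0 {m : ℕ} (D : Dataset m) (a : Bool) : FP D w0 a = 0 := by
  unfold FP; simp [predProb_w0]

lemma feas_nonempty {m : ℕ} (D : Dataset m) (γ : ℝ) (hγ : 0 ≤ γ) :
    Set.Nonempty { e : ℝ | ∃ w : Fin 4 → ℝ, (∀ i, 0 ≤ w i) ∧ (∑ i, w i = 1) ∧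
      |FP D w true - FP D w false| ≤ γ ∧ e = err D w } :=
  ⟨err D w0, w0, w0_nonneg, w0_sum, by simp [FP_w0, hγ], rfl⟩

lemma feas_bddBelow {m : ℕ} (D : Dataset m) (γ : ℝ) :
    BddBelow { e : ℝ | ∃ w : Fin 4 → ℝ, (∀ i, 0 ≤ w i) ∧ (∑ i, w i = 1) ∧
      |FP D w true - FP D w false| ≤ γ ∧ e = err D w } := by
  refine ⟨0, fun e he => ?_⟩
  obtain ⟨w, hw0, hw1, _, rfl⟩ := he
  exact err_nonneg D w hw0 hw1

set_option maxHeartbeats 1000000 in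
lemma fOpt_le_fOpt {m : ℕ} (hm : 0 < m) (γ C : ℝ) (hγ : 0 ≤ γ) (hC : 0 < C)
    (D D' : Dataset m) (i0 : Fin m)
    (hneighbor : ∀ i, i ≠ i0 → D i = D' i)
    (hmassD : ∀ a : Bool,
      C ≤ ((univ.filter fun i => (D i).1 = a ∧ (D i).2.2 = false).card : ℝ) / m)
    (hmassD' : ∀ a : Bool,
      C ≤ ((univ.filter fun i => (D' i).1 = a ∧ (D' i).2.2 = false).card : ℝ) / m) :
    fOpt D' γ ≤ fOpt D γ + (1 / m + 2 / (C * m)) := by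
  classical
  have hm0 : (0:ℝ) < (m:ℝ) := by exact_mod_cast hm
  have hCm : (0:ℝ) < C * m := mul_pos hC hm0
  have hnD : ∀ a : Bool,
      C * m ≤ ((univ.filter fun i => (D i).1 = a ∧ (D i).2.2 = false).card : ℝ) := by
    intro a; have := hmassD a; rw [le_div_iff₀ hm0] at this; exact this
  have hnD' : ∀ a : Bool,
      C * m ≤ ((univ.filter fun i => (D' i).1 = a ∧ (D' i).2.2 = false).card : ℝ) := by
    intro a; have := hmassD' a; rw [le_div_iff₀ hm0] at this; exact this
  have hcard' : ∀ a : Bool,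
      (0:ℝ) < ((univ.filter fun i => (D' i).1 = a ∧ (D' i).2.2 = false).card : ℝ) :=
    fun a => lt_of_lt_of_le hCm (hnD' a)
  -- FP values of the discriminatory classifiers on D'
  have hFPB_t : FP D' eB true = 0 :=
    FP_const D' eB true 0 (fun x => by simp [predProb_eB]) (hcard' true)
  have hFPB_f : FP D' eB false = 1 :=
    FP_const D' eB false 1 (fun x => by simp [predProb_eB]) (hcard' false)
  have hFPR_t : FP D' eR true = 1 :=
    FP_const D' eR true 1 (fun x => by simp [predProb_eR]) (hcard' true)
  have hFPR_f : FP D' eR false = 0 :=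
    FP_const D' eR false 0 (fun x => by simp [predProb_eR]) (hcard' false)
  -- the key step: every feasible value for D has a nearby feasible value for D'
  have key : ∀ e ∈ { e : ℝ | ∃ w : Fin 4 → ℝ, (∀ i, 0 ≤ w i) ∧ (∑ i, w i = 1) ∧
      |FP D w true - FP D w false| ≤ γ ∧ e = err D w },
      fOpt D' γ ≤ e + (1 / m + 2 / (C * m)) := by
    rintro e ⟨w, hw0, hw1, hfair, rfl⟩
    have hFPp : ∀ a : Bool, |FP D w a - FP D' w a| ≤ 1 / (C * m) := fun a =>
      FP_perturb D D' i0 hneighbor w hw0 hw1 a (C * m) hCm (hnD a) (hnD' a)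
    have herr := err_perturb hm D D' i0 hneighbor w hw0 hw1
    obtain ⟨herr1, herr2⟩ := abs_le.mp herr
    obtain ⟨hp1t, hp2t⟩ := abs_le.mp (hFPp true)
    obtain ⟨hp1f, hp2f⟩ := abs_le.mp (hFPp false)
    obtain ⟨hf1, hf2⟩ := abs_le.mp hfair
    have hd : |FP D' w true - FP D' w false| ≤ γ + 2 / (C * m) := by
      rw [abs_le]
      have h2 : 1 / (C * m) + 1 / (C * m) = 2 / (C * m) := by ring
      constructor <;> linarith
    obtain ⟨hd1, hd2⟩ := abs_le.mp hd
    have hInfle : ∀ w' : Fin 4 → ℝ, (∀ i, 0 ≤ w' i) → (∑ i, w' i = 1) →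
        |FP D' w' true - FP D' w' false| ≤ γ → fOpt D' γ ≤ err D' w' := by
      intro w' a b c
      exact csInf_le (feas_bddBelow D' γ) ⟨w', a, b, c, rfl⟩
    by_cases hcase : |FP D' w true - FP D' w false| ≤ γ
    · have := hInfle w hw0 hw1 hcase
      have h2 : (0:ℝ) ≤ 2 / (C * m) := by positivity
      linarith
    · by_cases hsign : 0 ≤ FP D' w true - FP D' w false
      · -- d > γ : mix with eB
        have habs : |FP D' w true - FP D' w false| = FP D' w true - FP D' w false :=
          abs_of_nonneg hsign
        rw [habs] at hcase
        have hdγ : γ < FP D' w true - FP D' w false := not_le.mp hcase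
        set d : ℝ := FP D' w true - FP D' w false with hd_def
        have hden : (0:ℝ) < 1 + d := by linarith
        set t : ℝ := (d - γ) / (1 + d) with ht_def
        have ht0 : 0 ≤ t := div_nonneg (by linarith) hden.le
        have ht1 : t ≤ 1 := by rw [div_le_one hden]; linarith
        have htle : t ≤ 2 / (C * m) := by
          have h1 : t ≤ d - γ := by
            rw [div_le_iff₀ hden]
            nlinarith [mul_nonneg (show (0:ℝ) ≤ d - γ by linarith) (show (0:ℝ) ≤ d by linarith)]
          linarith
        set w' : Fin 4 → ℝ := fun j => (1 - t) * w j + t * eB j with hw'_def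
        have hw'0 : ∀ j, 0 ≤ w' j := fun j =>
          add_nonneg (mul_nonneg (by linarith) (hw0 j)) (mul_nonneg ht0 (eB_nonneg j))
        have hw'1 : ∑ j, w' j = 1 := by
          simp only [hw'_def]
          rw [Finset.sum_add_distrib, ← Finset.mul_sum, ← Finset.mul_sum, hw1, eB_sum]
          ring
        have hfair' : |FP D' w' true - FP D' w' false| ≤ γ := by
          have : FP D' w' true - FP D' w' false = γ := by
            simp only [hw'_def]
            rw [FP_mix, FP_mix, hFPB_t, hFPB_f]
            have : (1 - t) * FP D' w true + t * 0 - ((1 - t) * FP D' w false + t * 1)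
                = (1 - t) * d - t := by rw [hd_def]; ring
            rw [this, ht_def]
            field_simp
            ring
          rw [this, abs_of_nonneg hγ]
        have herr' : err D' w' ≤ err D' w + t := by
          have hmix : err D' w' = (1 - t) * err D' w + t * err D' eB := err_mix D' t w eB
          have h1 := err_le_one hm D' eB eB_nonneg eB_sum
          have h2 := err_nonneg D' w hw0 hw1
          nlinarith
        have := hInfle w' hw'0 hw'1 hfair'
        linarith
      · -- d < -γ : mix with eR
        have hneg : FP D' w true - FP D' w false < 0 := not_le.mp hsign
        have habs : |FP D' w true - FP D' w false| = -(FP D' w true - FP D' w false) :=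
          abs_of_neg hneg
        rw [habs] at hcase
        have hdγ : γ < -(FP D' w true - FP D' w false) := not_le.mp hcase
        set d : ℝ := FP D' w true - FP D' w false with hd_def
        have hden : (0:ℝ) < 1 - d := by linarith
        set t : ℝ := (-d - γ) / (1 - d) with ht_def
        have ht0 : 0 ≤ t := div_nonneg (by linarith) hden.le
        have ht1 : t ≤ 1 := by rw [div_le_one hden]; linarith
        have htle : t ≤ 2 / (C * m) := by
          have h1 : t ≤ -d - γ := by
            rw [div_le_iff₀ hden]
            nlinarith [mul_nonneg (show (0:ℝ) ≤ -d - γ by linarith) (show (0:ℝ) ≤ -d by linarith)]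
          linarith
        set w' : Fin 4 → ℝ := fun j => (1 - t) * w j + t * eR j with hw'_def
        have hw'0 : ∀ j, 0 ≤ w' j := fun j =>
          add_nonneg (mul_nonneg (by linarith) (hw0 j)) (mul_nonneg ht0 (eR_nonneg j))
        have hw'1 : ∑ j, w' j = 1 := by
          simp only [hw'_def]
          rw [Finset.sum_add_distrib, ← Finset.mul_sum, ← Finset.mul_sum, hw1, eR_sum]
          ring
        have hfair' : |FP D' w' true - FP D' w' false| ≤ γ := by
          have : FP D' w' true - FP D' w' false = -γ := by
            simp only [hw'_def]
            rw [FP_mix, FP_mix, hFPR_t, hFPR_f]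
            have : (1 - t) * FP D' w true + t * 1 - ((1 - t) * FP D' w false + t * 0)
                = (1 - t) * d + t := by rw [hd_def]; ring
            rw [this, ht_def]
            field_simp
            ring
          rw [this, abs_neg, abs_of_nonneg hγ]
        have herr' : err D' w' ≤ err D' w + t := by
          have hmix : err D' w' = (1 - t) * err D' w + t * err D' eR := err_mix D' t w eR
          have h1 := err_le_one hm D' eR eR_nonneg eR_sum
          have h2 := err_nonneg D' w hw0 hw1
          nlinarith
        have := hInfle w' hw'0 hw'1 hfair'
        linarith
  have hle : fOpt D' γ - (1 / m + 2 / (C * m)) ≤ fOpt D γ :=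
    le_csInf (feas_nonempty D γ hγ) fun e he => by linarith [key e he]
  linarith

/-- with the maximally discriminatory classifiers `h_R, h_B`
included, on datasets whose group-negative masses are at least `C`, the
sensitivity of the minimum fair error is `O(1/m)`: neighboring datasets satisfy
`|f(D) − f(D')| ≤ 1/m + 2/(Cm)`. -/
theorem sensitivity_upper_bound {m : ℕ} (hm : 0 < m) (γ C : ℝ)
    (hγ : 0 ≤ γ) (hC : 0 < C)
    (D D' : Dataset m) (i0 : Fin m)
    (hneighbor : ∀ i, i ≠ i0 → D i = D' i)
    (hmassD : ∀ a : Bool,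
      C ≤ ((univ.filter fun i => (D i).1 = a ∧ (D i).2.2 = false).card : ℝ) / m)
    (hmassD' : ∀ a : Bool,
      C ≤ ((univ.filter fun i => (D' i).1 = a ∧ (D' i).2.2 = false).card : ℝ) / m) :
    |fOpt D γ - fOpt D' γ| ≤ 1 / m + 2 / (C * m) := by
  have h1 := fOpt_le_fOpt hm γ C hγ hC D D' i0 hneighbor hmassD hmassD'
  have h2 := fOpt_le_fOpt hm γ C hγ hC D' D i0
    (fun i hi => (hneighbor i hi).symm) hmassD' hmassD
  rw [abs_sub_le_iff]
  exact ⟨by linarith, by linarith⟩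

end Stmt12
end

section
/- Let ℋ be a finite set and ℓ : 𝒟^m × ℋ → ℝ with sensitivity Δℓ as above. The exponential mechanism, which on input D outputs h with probability exp(−ε ℓ(D,h)/(2Δℓ)) / ∑_{h'} exp(−ε ℓ(D,h')/(2Δℓ)), is ε-differentially private. -/
/-!
The exponential mechanism is a Gibbs distribution `exp (f h) / ∑ exp f` with
`f = -ε ℓ(D, ·) / (2Δ)`. Changing the database moves every exponent by at most `ε / 2`, so the
numerator grows by at most a factor `e^{ε/2}` and the normalising constant shrinks by at most
the same factor.
-/

open Finset

/-- Output probability of the exponential mechanism with loss `ℓ(D,·)`,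
privacy parameter `ε` and sensitivity bound `Δ` on candidate `h`. -/
noncomputable def expMechProb {𝒟 ℋ : Type*} [Fintype ℋ]
    (ℓ : 𝒟 → ℋ → ℝ) (ε Δ : ℝ) (D : 𝒟) (h : ℋ) : ℝ :=
  Real.exp (-ε * ℓ D h / (2 * Δ)) / ∑ h' : ℋ, Real.exp (-ε * ℓ D h' / (2 * Δ))

open Real

theorem exp_le_exp_mul_exp_of_sub_le {a b c : ℝ} (h : a - b ≤ c) : exp a ≤ exp c * exp b := by
  rw [← exp_add, exp_le_exp]
  linarith

theorem gibbs_le_exp_mul_gibbs {ι : Type*} [Fintype ι] {f g : ι → ℝ} {c : ℝ}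
    (hfg : ∀ i, |f i - g i| ≤ c) (i : ι) :
    exp (f i) / ∑ j, exp (f j) ≤ exp (2 * c) * (exp (g i) / ∑ j, exp (g j)) := by
  have hnum : exp (f i) ≤ exp c * exp (g i) :=
    exp_le_exp_mul_exp_of_sub_le (abs_le.mp (hfg i)).2
  have hden : ∑ j, exp (g j) ≤ exp c * ∑ j, exp (f j) := by
    rw [mul_sum]
    exact sum_le_sum fun j _ => exp_le_exp_mul_exp_of_sub_le (by linarith [(abs_le.mp (hfg j)).1])
  have hpos : ∀ u : ι → ℝ, 0 < ∑ j, exp (u j) := fun u =>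
    sum_pos (fun j _ => exp_pos (u j)) ⟨i, mem_univ i⟩
  rw [mul_div_assoc', div_le_div_iff₀ (hpos f) (hpos g), two_mul, exp_add]
  calc exp (f i) * ∑ j, exp (g j)
      ≤ (exp c * exp (g i)) * (exp c * ∑ j, exp (f j)) :=
        mul_le_mul hnum hden (hpos g).le (by positivity)
    _ = exp c * exp c * exp (g i) * ∑ j, exp (f j) := by ring

theorem abs_scaled_sub_le_half {ε Δ a b : ℝ} (hε : 0 ≤ ε) (hΔ : 0 < Δ) (hab : |a - b| ≤ Δ) :
    |-ε * a / (2 * Δ) - -ε * b / (2 * Δ)| ≤ ε / 2 := by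
  have hrw : -ε * a / (2 * Δ) - -ε * b / (2 * Δ) = ε / (2 * Δ) * (b - a) := by
    field_simp
    ring
  rw [hrw, abs_mul, abs_of_nonneg (by positivity), abs_sub_comm]
  calc ε / (2 * Δ) * |a - b| ≤ ε / (2 * Δ) * Δ := by gcongr
    _ = ε / 2 := by field_simp

theorem expMech_privacy_general {𝒟 ℋ : Type*} [Fintype ℋ]
    (N : 𝒟 → 𝒟 → Prop) (ℓ : 𝒟 → ℋ → ℝ) (Δ : ℝ) (hΔ : 0 < Δ)
    (hsens : ∀ (h : ℋ) (D D' : 𝒟), N D D' → |ℓ D h - ℓ D' h| ≤ Δ)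
    (ε : ℝ) (hε : 0 ≤ ε) :
    ∀ D D', N D D' → ∀ h : ℋ,
      expMechProb ℓ ε Δ D h ≤ Real.exp ε * expMechProb ℓ ε Δ D' h := by
  intro D D' hN h
  have hexp := gibbs_le_exp_mul_gibbs
    (fun h' => abs_scaled_sub_le_half hε hΔ (hsens h' D D' hN)) h
  rwa [mul_div_cancel₀ ε two_ne_zero] at hexp

/-- privacy of the exponential mechanism: if
`|ℓ(D,h) − ℓ(D',h)| ≤ Δℓ` for all candidates `h` and neighboring databases,
then the exponential mechanism is `ε`-differentially private:
`P[M(D) = h] ≤ e^ε · P[M(D') = h]`. -/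
theorem expMech_privacy {𝒟 ℋ : Type*} [Fintype ℋ] [Nonempty ℋ]
    (N : 𝒟 → 𝒟 → Prop) (ℓ : 𝒟 → ℋ → ℝ) (Δ : ℝ) (hΔ : 0 < Δ)
    (hsens : ∀ (h : ℋ) (D D' : 𝒟), N D D' → |ℓ D h - ℓ D' h| ≤ Δ)
    (ε : ℝ) (hε : 0 ≤ ε) :
    ∀ D D', N D D' → ∀ h : ℋ,
      expMechProb ℓ ε Δ D h ≤ Real.exp ε * expMechProb ℓ ε Δ D' h :=
  expMech_privacy_general N ℓ Δ hΔ hsens ε hε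
end
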